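/- Let Φ be an injective IFS and a ∈ Ω_k with no singular connection for (Φ,a). Then the number of itineraries grows subexponentially in a uniform neighborhood: lim_{ε→0⁺} limsup_{n→∞} (1/n)·log #I^{(n)}_{Φ,a}(ε) = 0, where I^{(n)}_{Φ,a}(ε) = ⋃_{|δ|≤ε} I^{(n)}_{Φ,a+δ} and I^{(n)}_{Φ,b} is the set of itineraries of order n of (Φ,b). -/

import Mathlib

open Filter Set Topology
open scoped NNReal

noncomputable def pcIdx {k : ℕ} (hk : 2 ≤ k) (a : Fin (k-1) → ℝ) (x : ℝ) : Fin k :=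
  ⟨(Finset.univ.filter fun i => a i ≤ x).card, by
    have h := Finset.card_filter_le (Finset.univ : Finset (Fin (k-1))) (fun i => a i ≤ x)
    simp only [Finset.card_univ, Fintype.card_fin] at h
    omega⟩

/-- The piecewise contraction `f_{Φ,a}` determined by the IFS `φ` and partition points `a`. -/
noncomputable def pc {k : ℕ} (hk : 2 ≤ k) (φ : Fin k → ℝ → ℝ) (a : Fin (k-1) → ℝ) (x : ℝ) : ℝ :=
  φ (pcIdx hk a x) x

/-- `φ_ω = φ_{ω_n} ∘ ⋯ ∘ φ_{ω_1}`. -/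
def wcomp {k : ℕ} (φ : Fin k → ℝ → ℝ) {n : ℕ} (ω : Fin n → Fin k) (x : ℝ) : ℝ :=
  (List.ofFn ω).foldl (fun y i => φ i y) x

/-- `(Φ,a)` has a singular connection: `φ_ω(S_a) ∩ S_a ≠ ∅` for some nonempty word `ω`. -/
def hasSingConn {k : ℕ} (φ : Fin k → ℝ → ℝ) (a : Fin (k-1) → ℝ) : Prop :=
  ∃ n : ℕ, ∃ ω : Fin (n+1) → Fin k, ∃ i j : Fin (k-1), wcomp φ ω (a i) = a j

/-- `max_i |z i|`. -/
noncomputable def maxAbs {k : ℕ} (hk : 2 ≤ k) (z : Fin k → ℝ) : ℝ :=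
  Finset.univ.sup' (Finset.univ_nonempty_iff.mpr ⟨⟨0, by omega⟩⟩) fun i => |z i|

/-- The set of itineraries of order `n` of `(Φ,a)`. -/
noncomputable def itin {k : ℕ} (hk : 2 ≤ k) (φ : Fin k → ℝ → ℝ) (a : Fin (k-1) → ℝ) (n : ℕ) :
    Set (Fin n → Fin k) :=
  {ω | ∃ x : ℝ, (∀ j < n, (pc hk φ a)^[j] x ∉ Set.range a) ∧
       ∀ j : Fin n, ω j = pcIdx hk a ((pc hk φ a)^[(j : ℕ)] x)}

/-- `I^{(n)}_{Φ,a}(ε) = ⋃_{|δ| ≤ ε} I^{(n)}_{Φ,a+δ}`. -/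
noncomputable def itinE {k : ℕ} (hk : 2 ≤ k) (φ : Fin k → ℝ → ℝ) (a : Fin (k-1) → ℝ)
    (ε : ℝ) (n : ℕ) : Set (Fin n → Fin k) :=
  {ω | ∃ δ : ℝ, |δ| ≤ ε ∧ ω ∈ itin hk φ (fun i => a i + δ) n}

/-- `Ω^ε_{Φ,a} = ⋂_{m ≥ 1} closure (⋃_{n ≥ m} ⋃_{ω ∈ I^{(n)}(ε)} {φ_ω(0)})`. -/
noncomputable def omegaSet {k : ℕ} (hk : 2 ≤ k) (φ : Fin k → ℝ → ℝ) (a : Fin (k-1) → ℝ)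
    (ε : ℝ) : Set ℝ :=
  ⋂ m : ℕ, closure {y : ℝ | ∃ n, m ≤ n ∧ ∃ ω ∈ itinE hk φ a ε n, wcomp φ ω 0 = y}

/-- The ω-limit set of `x` under `f`. -/
def omegaLimitPt (f : ℝ → ℝ) (x : ℝ) : Set ℝ :=
  {y | MapClusterPt y Filter.atTop fun n => f^[n] x}

/-- `f` is asymptotically periodic. -/
def AsympPeriodic (f : ℝ → ℝ) : Prop :=
  {x : ℝ | ∃ p : ℕ, 1 ≤ p ∧ f^[p] x = x}.Finite ∧
  ∀ x : ℝ, ∃ z : ℝ, ∃ p : ℕ, 1 ≤ p ∧ f^[p] z = z ∧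
    omegaLimitPt f x = Set.range fun j : Fin p => f^[(j : ℕ)] z

/-- `f` is asymptotically periodic on the invariant set `s`. -/
def AsympPeriodicOn (f : ℝ → ℝ) (s : Set ℝ) : Prop :=
  {x ∈ s | ∃ p : ℕ, 1 ≤ p ∧ f^[p] x = x}.Finite ∧
  ∀ x ∈ s, ∃ z : ℝ, ∃ p : ℕ, 1 ≤ p ∧ f^[p] z = z ∧
    omegaLimitPt f x = Set.range fun j : Fin p => f^[(j : ℕ)] z
/-!
Fix a block length `L`. For small `ε`, the absence of singular connections keeps every
`φ_w(a_i)` with `0 < |w| < L` more than `8ε` away from `S_a`, so an orbit of `f_{Φ,a+δ}`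
(`|δ| ≤ ε`) comes `3ε`-close to a partition point at most once in any `L` consecutive steps.
An itinerary in `I^{(n)}_{Φ,a}(ε)` is then determined by four pieces of data: the time `τ` at
which the orbit enters an absorbing interval `[-M, M]`; the sign of the starting point (outside
`[-M, M]` the monotone maps `φ_i`, which send `±M` into `[-M, M]`, make the side and hence the
symbol evolve in lockstep for orbits starting on the same side); the `ε`-cell of the orbit at
time `τ` (orbits following the same symbols stay `ε`-close, the maps being non-expanding, and
`ε`-close orbits can only read different symbols near a partition point); and, block by block,
the position, partition point and side of the close approaches. Hence
`#I^{(n)}(ε) ≤ C_ε (n+1) (2(k-1)L+1)^{n/L+1}`, the limsup is at most `log (2(k-1)L+1) / L`,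
and this tends to `0` as `L → ∞`.
-/

section Words

variable {k : ℕ}

theorem wcomp_cons (φ : Fin k → ℝ → ℝ) {n : ℕ} (c : Fin k) (w : Fin n → Fin k) (x : ℝ) :
    wcomp φ (Fin.cons c w) x = wcomp φ w (φ c x) := by
  simp [wcomp, List.ofFn_succ]

theorem lipschitzWith_wcomp {K : ℝ≥0} {φ : Fin k → ℝ → ℝ} (hφ : ∀ c, LipschitzWith K (φ c)) :
    ∀ {n : ℕ} (w : Fin n → Fin k), LipschitzWith (K ^ n) (wcomp φ w)
  | 0, w => by
    have : wcomp φ w = id := funext fun x => by simp [wcomp]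
    rw [this, pow_zero]
    exact LipschitzWith.id
  | n + 1, w => by
    rw [← Fin.cons_self_tail w, pow_succ]
    have : wcomp φ (Fin.cons (w 0) (Fin.tail w)) = wcomp φ (Fin.tail w) ∘ φ (w 0) :=
      funext (wcomp_cons φ _ _)
    rw [this]
    exact (lipschitzWith_wcomp hφ _).comp (hφ _)

theorem iterate_pc_eq_wcomp (hk : 2 ≤ k) (φ : Fin k → ℝ → ℝ) (b : Fin (k-1) → ℝ) :
    ∀ (t : ℕ) (y : ℝ), ∃ w : Fin t → Fin k, (pc hk φ b)^[t] y = wcomp φ w y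
  | 0, y => ⟨Fin.elim0, by simp [wcomp]⟩
  | t + 1, y => by
    obtain ⟨w, hw⟩ := iterate_pc_eq_wcomp hk φ b t (pc hk φ b y)
    exact ⟨Fin.cons (pcIdx hk b y) w, by rw [Function.iterate_succ_apply, hw, wcomp_cons]; rfl⟩

end Words

theorem exists_absorbing_radius {ι : Type*} [Fintype ι] {φ : ι → ℝ → ℝ} {lam : ℝ≥0}
    (hlam : lam < 1) (hφ : ∀ i, LipschitzWith lam (φ i)) (R : ℝ) :
    ∃ M, R ≤ M ∧ ∀ i y, |y| ≤ M → |φ i y| ≤ M := by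
  set A := ∑ i, |φ i 0|
  have hlam' : (lam : ℝ) < 1 := hlam
  refine ⟨max R (A / (1 - lam)), le_max_left _ _, fun i y hy => ?_⟩
  set M := max R (A / (1 - lam))
  have hA : |φ i 0| ≤ A :=
    Finset.single_le_sum (fun j _ => abs_nonneg (φ j 0)) (Finset.mem_univ i)
  have hAM : A ≤ (1 - lam) * M := (div_le_iff₀' (by linarith)).1 (le_max_right _ _)
  have hlip : |φ i y - φ i 0| ≤ lam * |y| := by
    simpa [Real.dist_eq] using (hφ i).dist_le_mul y 0
  calc |φ i y| ≤ |φ i 0| + lam * |y| := by linarith [abs_sub_abs_le_abs_sub (φ i y) (φ i 0)]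
    _ ≤ (1 - lam) * M + lam * M := by gcongr; linarith
    _ = M := by ring

theorem exists_quantizer (M : ℝ) {ε : ℝ} (hε : 0 < ε) :
    ∃ N, ∃ q : ℝ → Fin N, ∀ y y', |y| ≤ M → |y'| ≤ M → q y = q y' → |y - y'| < ε := by
  refine ⟨⌊2 * M / ε⌋₊ + 1, fun y => ⟨min ⌊(y + M) / ε⌋₊ ⌊2 * M / ε⌋₊,
    Nat.lt_succ_of_le (min_le_right _ _)⟩, fun y y' hy hy' h => ?_⟩
  have hcell : ∀ z, |z| ≤ M → min ⌊(z + M) / ε⌋₊ ⌊2 * M / ε⌋₊ = ⌊(z + M) / ε⌋₊ := fun z hz =>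
    min_eq_left (Nat.floor_le_floor (by gcongr; linarith [(abs_le.1 hz).2]))
  have hpos : ∀ z, |z| ≤ M → 0 ≤ (z + M) / ε := fun z hz =>
    div_nonneg (by linarith [(abs_le.1 hz).1]) hε.le
  have hfloor : ⌊(y + M) / ε⌋ = ⌊(y' + M) / ε⌋ := by
    rw [← Int.natCast_floor_eq_floor (hpos y hy), ← Int.natCast_floor_eq_floor (hpos y' hy'),
      ← hcell y hy, ← hcell y' hy']
    exact congrArg _ (Fin.mk.inj_iff.1 h)
  have := Int.abs_sub_lt_one_of_floor_eq_floor hfloor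
  rwa [← sub_div, add_sub_add_right_eq_sub, abs_div, abs_of_pos hε, div_lt_one hε] at this

section SideOfAbsorbingInterval

theorem nonneg_iff_of_monotone {f : ℝ → ℝ} (hf : Monotone f) {M : ℝ} (hM : |f M| ≤ M)
    (hM' : |f (-M)| ≤ M) {z : ℝ} (hz : M < |z|) (hfz : M < |f z|) : 0 ≤ f z ↔ 0 ≤ z := by
  rw [abs_le] at hM hM'
  rcases lt_abs.1 hz with hz | hz
  · have := hf hz.le
    rcases lt_abs.1 hfz with h | h <;> constructor <;> intro <;> linarith
  · have := hf (show z ≤ -M by linarith)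
    rcases lt_abs.1 hfz with h | h <;> constructor <;> intro <;> linarith

theorem nonneg_iff_nonneg_of_abs_gt {f : ℝ → ℝ} (hf : Monotone f ∨ Antitone f) {M : ℝ}
    (hM : ∀ y, |y| ≤ M → |f y| ≤ M) (hM0 : 0 ≤ M) {y y' : ℝ} (hy : M < |y|) (hy' : M < |y'|)
    (hfy : M < |f y|) (hfy' : M < |f y'|) (h : 0 ≤ y ↔ 0 ≤ y') : 0 ≤ f y ↔ 0 ≤ f y' := by
  have hMM : |M| ≤ M := (abs_of_nonneg hM0).le
  have hMM' : |-M| ≤ M := by rwa [abs_neg]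
  rcases hf with hf | hf
  · rw [nonneg_iff_of_monotone hf (hM _ hMM) (hM _ hMM') hy hfy,
      nonneg_iff_of_monotone hf (hM _ hMM) (hM _ hMM') hy' hfy', h]
  · have key : ∀ z, M < |z| → M < |f z| → (0 ≤ f z ↔ 0 ≤ -z) := fun z hz hfz => by
      simpa using nonneg_iff_of_monotone (f := fun z => f (-z)) (fun u v huv => hf (neg_le_neg huv))
        (by simpa using hM _ hMM') (by simpa using hM _ hMM) (z := -z) (by simpa using hz)
        (by simpa using hfz)
    rw [key y hy hfy, key y' hy' hfy', neg_nonneg, neg_nonneg]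
    rcases lt_abs.1 hy with hy | hy <;> rcases lt_abs.1 hy' with hy' | hy'
    · exact iff_of_false (by linarith) (by linarith)
    · linarith [h.1 (by linarith)]
    · linarith [h.2 (by linarith)]
    · exact iff_of_true (by linarith) (by linarith)

end SideOfAbsorbingInterval

section Symbols

variable {k : ℕ} (hk : 2 ≤ k)

theorem pcIdx_congr {b b' : Fin (k-1) → ℝ} {y y' : ℝ} (h : ∀ i, b i ≤ y ↔ b' i ≤ y') :
    pcIdx hk b y = pcIdx hk b' y' :=
  Fin.ext <| congrArg Finset.card (Finset.filter_congr fun i _ => h i :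
    Finset.univ.filter (fun i => b i ≤ y) = Finset.univ.filter (fun i => b' i ≤ y'))

theorem pcIdx_eq_of_abs_gt {M : ℝ} (hM0 : 0 ≤ M) {b b' : Fin (k-1) → ℝ} (hb : ∀ i, |b i| ≤ M)
    (hb' : ∀ i, |b' i| ≤ M) {y y' : ℝ} (hy : M < |y|) (hy' : M < |y'|) (h : 0 ≤ y ↔ 0 ≤ y') :
    pcIdx hk b y = pcIdx hk b' y' := by
  refine pcIdx_congr hk fun i => ?_
  have := abs_le.1 (hb i)
  have := abs_le.1 (hb' i)
  rcases lt_abs.1 hy with hy | hy <;> rcases lt_abs.1 hy' with hy' | hy'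
  · exact iff_of_true (by linarith) (by linarith)
  · linarith [h.1 (by linarith)]
  · linarith [h.2 (by linarith)]
  · exact iff_of_false (not_le.2 (by linarith)) (not_le.2 (by linarith))

noncomputable def nearMark (b : Fin (k-1) → ℝ) (r y : ℝ) : Option (Fin (k-1) × Bool) :=
  open Classical in
  if h : ∃ j, |y - b j| ≤ r then some (h.choose, decide (b h.choose ≤ y)) else none

theorem nearMark_eq_none_iff {b : Fin (k-1) → ℝ} {r y : ℝ} :
    nearMark b r y = none ↔ ∀ j, r < |y - b j| := by
  unfold nearMark
  split_ifs with h
  · simpa using h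
  · simpa using h

theorem nearMark_eq_some {b : Fin (k-1) → ℝ} {r y : ℝ} {j : Fin (k-1)} {s : Bool}
    (h : nearMark b r y = some (j, s)) : |y - b j| ≤ r ∧ (b j ≤ y ↔ s = true) := by
  unfold nearMark at h
  split_ifs at h with hex
  obtain ⟨rfl, rfl⟩ := Prod.mk.inj (Option.some.inj h)
  exact ⟨hex.choose_spec, decide_eq_true_iff.symm⟩

theorem pcIdx_eq_of_nearMark_eq {a : Fin (k-1) → ℝ} {ε δ δ' y y' : ℝ}
    (hgap : ∀ i j, i ≠ j → 3 * ε < |a i - a j|) (hδ : |δ| ≤ ε) (hδ' : |δ'| ≤ ε)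
    (hy : |y - y'| ≤ ε)
    (h : nearMark (fun i => a i + δ) (3 * ε) y = nearMark (fun i => a i + δ') (3 * ε) y') :
    pcIdx hk (fun i => a i + δ) y = pcIdx hk (fun i => a i + δ') y' := by
  refine pcIdx_congr hk fun i => ?_
  rw [abs_le] at hδ hδ' hy
  rcases hm : nearMark (fun i => a i + δ) (3 * ε) y with _ | ⟨j, s⟩
  · rcases lt_abs.1 (nearMark_eq_none_iff.1 hm i) with hi | hi
    · exact iff_of_true (by linarith) (by linarith)
    · exact iff_of_false (not_le.2 (by linarith)) (not_le.2 (by linarith))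
  · obtain ⟨hj, hs⟩ := nearMark_eq_some hm
    obtain ⟨hj', hs'⟩ := nearMark_eq_some (h ▸ hm)
    rcases eq_or_ne i j with rfl | hij
    · exact hs.trans hs'.symm
    · rw [abs_le] at hj hj'
      -- `y` and `y'` lie on the side of `a i` on which `a j` lies
      rcases lt_abs.1 (hgap i j hij) with hij | hij
      · exact iff_of_false (not_le.2 (by linarith)) (not_le.2 (by linarith))
      · exact iff_of_true (by linarith) (by linarith)

end Symbols

section SparseSequences

variable {α : Type*} {L : ℕ}

def IsSparse (L : ℕ) (s : ℕ → Option α) : Prop :=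
  ∀ ⦃t u⦄, t < u → s t ≠ none → s u ≠ none → t + L ≤ u

theorem IsSparse.eq_of_lt_add {s : ℕ → Option α} (hs : IsSparse L s) {t u : ℕ} (ht : s t ≠ none)
    (hu : s u ≠ none) (htu : t < u + L) (hut : u < t + L) : t = u := by
  rcases lt_trichotomy t u with h | h | h
  · linarith [hs h ht hu]
  · exact h
  · linarith [hs h hu ht]

def blockCode (L m : ℕ) (s : ℕ → Option α) : Fin m → Option (Fin L × α) :=
  fun i => (List.finRange L).findSome? fun r : Fin L => (s (L * i + r)).map (r, ·)

theorem blockCode_eq_some {m : ℕ} {s : ℕ → Option α} {i : Fin m} {r : Fin L} {v : α}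
    (h : blockCode L m s i = some (r, v)) : s (L * i + r) = some v := by
  obtain ⟨r', -, hr'⟩ := List.exists_of_findSome?_eq_some h
  obtain ⟨v', hv', hrv⟩ := Option.map_eq_some_iff.1 hr'
  obtain ⟨rfl, rfl⟩ := Prod.mk.inj hrv
  exact hv'

theorem IsSparse.blockCode_apply (hL : 0 < L) {m : ℕ} {s : ℕ → Option α} (hs : IsSparse L s)
    {t : ℕ} {v : α} (hv : s t = some v) (hm : t / L < m) :
    blockCode L m s ⟨t / L, hm⟩ = some (⟨t % L, Nat.mod_lt t hL⟩, v) := by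
  have hsome : (blockCode L m s ⟨t / L, hm⟩).isSome := by
    refine List.findSome?_isSome_iff.2 ⟨⟨t % L, Nat.mod_lt t hL⟩, List.mem_finRange _, ?_⟩
    simp [Nat.div_add_mod, hv]
  obtain ⟨⟨r, v'⟩, hrv⟩ := Option.isSome_iff_exists.1 hsome
  have hr := blockCode_eq_some hrv
  have hdm := Nat.div_add_mod t L
  have hrL := r.isLt
  have hmL := Nat.mod_lt t hL
  have hrt : L * (t / L) + r = t :=
    hs.eq_of_lt_add (by simp [hr]) (by simp [hv]) (by generalize L * (t / L) = P at hdm ⊢; omega)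
      (by generalize L * (t / L) = P at hdm ⊢; omega)
  rw [hrt, hv, Option.some.injEq] at hr
  rw [hrv, ← hr]
  congr
  ext
  simp only
  generalize L * (t / L) = P at hdm hrt
  omega

theorem IsSparse.eq_of_blockCode_eq (hL : 0 < L) {m : ℕ} {s s' : ℕ → Option α}
    (hs : IsSparse L s) (hs' : IsSparse L s') (h : blockCode L m s = blockCode L m s') {t : ℕ}
    (ht : t < L * m) : s t = s' t := by
  have hm : t / L < m := Nat.div_lt_of_lt_mul ht
  have key : ∀ {s s' : ℕ → Option α}, IsSparse L s → blockCode L m s = blockCode L m s' →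
      ∀ v, s t = some v → s' t = some v := fun hs h v hv => by
    have := blockCode_eq_some ((h ▸ hs.blockCode_apply hL hv hm :))
    rwa [Nat.div_add_mod] at this
  exact Option.ext fun v => ⟨key hs h v, key hs' h.symm v⟩

end SparseSequences

section EntryTime

open Classical in
/-- The first `t < n` with `|f^[t] x| ≤ M`, or `n` if there is none. -/
noncomputable def entryTime (f : ℝ → ℝ) (M : ℝ) (n : ℕ) (x : ℝ) : ℕ :=
  Nat.find (⟨n, .inl le_rfl⟩ : ∃ t, n ≤ t ∨ |f^[t] x| ≤ M)

variable {f : ℝ → ℝ} {M : ℝ} {n : ℕ} {x : ℝ}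

theorem entryTime_le : entryTime f M n x ≤ n :=
  Nat.find_min' _ (.inl le_rfl)

theorem lt_abs_iterate_of_lt_entryTime {t : ℕ} (ht : t < entryTime f M n x) :
    M < |f^[t] x| := by
  classical
  have := Nat.find_min _ ht
  simp only [not_or, not_le] at this
  exact this.2

theorem abs_iterate_entryTime_le (h : entryTime f M n x < n) :
    |f^[entryTime f M n x] x| ≤ M := by
  classical
  exact (Nat.find_spec (⟨n, .inl le_rfl⟩ : ∃ t, n ≤ t ∨ |f^[t] x| ≤ M)).resolve_left
    (not_le.2 h)

end EntryTime

section Orbits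

variable {k : ℕ} (hk : 2 ≤ k) (φ : Fin k → ℝ → ℝ)

theorem pcIdx_iterate_eq_of_far {M : ℝ} (hM0 : 0 ≤ M) (hM : ∀ c y, |y| ≤ M → |φ c y| ≤ M)
    (hmono : ∀ c, Monotone (φ c) ∨ Antitone (φ c)) {b b' : Fin (k-1) → ℝ}
    (hb : ∀ i, |b i| ≤ M) (hb' : ∀ i, |b' i| ≤ M) {x x' : ℝ} (hx : 0 ≤ x ↔ 0 ≤ x') {T : ℕ}
    (hfar : ∀ t < T, M < |(pc hk φ b)^[t] x| ∧ M < |(pc hk φ b')^[t] x'|) {t : ℕ} (ht : t < T) :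
    pcIdx hk b ((pc hk φ b)^[t] x) = pcIdx hk b' ((pc hk φ b')^[t] x') := by
  have hside : ∀ t < T, (0 ≤ (pc hk φ b)^[t] x ↔ 0 ≤ (pc hk φ b')^[t] x') := by
    intro t
    induction t with
    | zero => exact fun _ => hx
    | succ t ih =>
      intro ht
      have hc := pcIdx_eq_of_abs_gt hk hM0 hb hb' (hfar t (by omega)).1 (hfar t (by omega)).2
        (ih (by omega))
      have hnext := hfar (t + 1) ht
      simp only [Function.iterate_succ_apply', pc, ← hc] at hnext ⊢
      exact nonneg_iff_nonneg_of_abs_gt (hmono _) (hM _) hM0 (hfar t (by omega)).1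
        (hfar t (by omega)).2 hnext.1 hnext.2 (ih (by omega))
  exact pcIdx_eq_of_abs_gt hk hM0 hb hb' (hfar t ht).1 (hfar t ht).2 (hside t ht)

theorem pcIdx_iterate_eq_of_nearMark_eq (hφ : ∀ c, LipschitzWith 1 (φ c))
    {a : Fin (k-1) → ℝ} {ε δ δ' x x' : ℝ} (hgap : ∀ i j, i ≠ j → 3 * ε < |a i - a j|)
    (hδ : |δ| ≤ ε) (hδ' : |δ'| ≤ ε) {τ n : ℕ}
    (hτ : |(pc hk φ fun i => a i + δ)^[τ] x - (pc hk φ fun i => a i + δ')^[τ] x'| ≤ ε)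
    (hmark : ∀ t, τ ≤ t → t < n →
      nearMark (fun i => a i + δ) (3 * ε) ((pc hk φ fun i => a i + δ)^[t] x) =
        nearMark (fun i => a i + δ') (3 * ε) ((pc hk φ fun i => a i + δ')^[t] x'))
    {t : ℕ} (hτt : τ ≤ t) (htn : t < n) :
    pcIdx hk (fun i => a i + δ) ((pc hk φ fun i => a i + δ)^[t] x) =
      pcIdx hk (fun i => a i + δ') ((pc hk φ fun i => a i + δ')^[t] x') := by
  set f := pc hk φ fun i => a i + δ
  set f' := pc hk φ fun i => a i + δ'
  have hsymb : ∀ t, τ ≤ t → t < n → |f^[t] x - f'^[t] x'| ≤ ε →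
      pcIdx hk (fun i => a i + δ) (f^[t] x) = pcIdx hk (fun i => a i + δ') (f'^[t] x') :=
    fun t h₁ h₂ hd => pcIdx_eq_of_nearMark_eq hk hgap hδ hδ' hd (hmark t h₁ h₂)
  have hclose : ∀ t, τ ≤ t → t ≤ n → |f^[t] x - f'^[t] x'| ≤ ε := by
    intro t ht
    induction t, ht using Nat.le_induction with
    | base => exact fun _ => hτ
    | succ t ht ih =>
      intro htn
      have hd := ih (by omega)
      simp only [Function.iterate_succ_apply', f, f', pc]
      rw [hsymb t ht (by omega) hd]
      refine le_trans ?_ hd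
      simpa [Real.dist_eq] using (hφ _).dist_le_mul (f^[t] x) (f'^[t] x')
  exact hsymb t hτt htn (hclose t hτt htn.le)

theorem isSparse_nearMark (hφ : ∀ c, LipschitzWith 1 (φ c)) {a : Fin (k-1) → ℝ} {ε δ : ℝ}
    {L : ℕ} (hsep : ∀ g, 0 < g → g < L → ∀ (w : Fin g → Fin k) i j,
      8 * ε < |wcomp φ w (a i) - a j|) (hδ : |δ| ≤ ε) (x : ℝ) :
    IsSparse L fun t =>
      nearMark (fun i => a i + δ) (3 * ε) ((pc hk φ fun i => a i + δ)^[t] x) := by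
  set f := pc hk φ fun i => a i + δ
  intro t u htu ht hu
  by_contra! hL
  obtain ⟨i, hi⟩ : ∃ i, |f^[t] x - (a i + δ)| ≤ 3 * ε := by
    by_contra! h
    exact ht (nearMark_eq_none_iff.2 h)
  obtain ⟨j, hj⟩ : ∃ j, |f^[u] x - (a j + δ)| ≤ 3 * ε := by
    by_contra! h
    exact hu (nearMark_eq_none_iff.2 h)
  obtain ⟨w, hw⟩ : ∃ w : Fin (u - t) → Fin k, f^[u] x = wcomp φ w (f^[t] x) := by
    obtain ⟨w, hw⟩ := iterate_pc_eq_wcomp hk φ _ (u - t) (f^[t] x)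
    exact ⟨w, by rw [← hw, ← Function.iterate_add_apply, Nat.sub_add_cancel htu.le]⟩
  have hit : |a i - f^[t] x| ≤ 4 * ε := by
    rw [abs_le] at hi hδ ⊢
    constructor <;> linarith
  have hiu : |wcomp φ w (a i) - f^[u] x| ≤ 4 * ε := by
    rw [hw]
    refine le_trans ?_ hit
    simpa [Real.dist_eq] using (lipschitzWith_wcomp hφ w).dist_le_mul (a i) (f^[t] x)
  have hij : |wcomp φ w (a i) - a j| ≤ 8 * ε := by
    rw [abs_le] at hiu hj hδ ⊢
    constructor <;> linarith
  linarith [hsep (u - t) (by omega) (by omega) w i j]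

end Orbits

section Counting

variable {k : ℕ} (hk : 2 ≤ k) (φ : Fin k → ℝ → ℝ) (a : Fin (k-1) → ℝ)

noncomputable def itinCode (ε M : ℝ) {N : ℕ} (q : ℝ → Fin N) (L m n : ℕ) (δ x : ℝ) :
    Fin (n + 1) × Bool × Fin N × (Fin m → Option (Fin L × (Fin (k-1) × Bool))) :=
  (⟨entryTime (pc hk φ fun i => a i + δ) M n x, Nat.lt_succ_of_le entryTime_le⟩,
    decide (0 ≤ x),
    q ((pc hk φ fun i => a i + δ)^[entryTime (pc hk φ fun i => a i + δ) M n x] x),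
    blockCode L m fun t =>
      nearMark (fun i => a i + δ) (3 * ε) ((pc hk φ fun i => a i + δ)^[t] x))

variable {φ a} {ε M : ℝ} {N : ℕ} {q : ℝ → Fin N} {L m n : ℕ}

theorem pcIdx_iterate_eq_of_itinCode_eq (hφ : ∀ c, LipschitzWith 1 (φ c))
    (hmono : ∀ c, Monotone (φ c) ∨ Antitone (φ c)) (hM0 : 0 ≤ M)
    (hM : ∀ c y, |y| ≤ M → |φ c y| ≤ M) (haM : ∀ i, |a i| + ε ≤ M)
    (hq : ∀ y y', |y| ≤ M → |y'| ≤ M → q y = q y' → |y - y'| < ε)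
    (hgap : ∀ i j, i ≠ j → 3 * ε < |a i - a j|) (hL : 0 < L)
    (hsep : ∀ g, 0 < g → g < L → ∀ (w : Fin g → Fin k) i j, 8 * ε < |wcomp φ w (a i) - a j|)
    (hnm : n ≤ L * m) {δ δ' x x' : ℝ} (hδ : |δ| ≤ ε) (hδ' : |δ'| ≤ ε)
    (h : itinCode hk φ a ε M q L m n δ x = itinCode hk φ a ε M q L m n δ' x') {t : ℕ}
    (ht : t < n) :
    pcIdx hk (fun i => a i + δ) ((pc hk φ fun i => a i + δ)^[t] x) =
      pcIdx hk (fun i => a i + δ') ((pc hk φ fun i => a i + δ')^[t] x') := by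
  simp only [itinCode, Prod.mk.injEq, Fin.mk.injEq, decide_eq_decide] at h
  obtain ⟨hτ, hx, hqτ, hcode⟩ := h
  have hb : ∀ δ, |δ| ≤ ε → ∀ i, |a i + δ| ≤ M := fun δ hδ i =>
    (abs_add_le _ _).trans (by linarith [haM i])
  by_cases htτ : t < entryTime (pc hk φ fun i => a i + δ) M n x
  · refine pcIdx_iterate_eq_of_far hk φ hM0 hM hmono (hb δ hδ) (hb δ' hδ') hx
      (fun u hu => ⟨lt_abs_iterate_of_lt_entryTime hu, ?_⟩) htτ
    exact lt_abs_iterate_of_lt_entryTime (hτ ▸ hu)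
  · have hτn : entryTime (pc hk φ fun i => a i + δ) M n x < n := by omega
    refine pcIdx_iterate_eq_of_nearMark_eq hk φ hφ hgap hδ hδ' ?_
      (fun u _ hu => (isSparse_nearMark hk φ hφ hsep hδ x).eq_of_blockCode_eq hL
        (isSparse_nearMark hk φ hφ hsep hδ' x') hcode (by omega)) (not_lt.1 htτ) ht
    have hτn' := hτ ▸ hτn
    have hcell := hq _ _ (abs_iterate_entryTime_le hτn) (abs_iterate_entryTime_le hτn') hqτ
    rw [← hτ] at hcell
    exact hcell.le

theorem card_itinE_le (hφ : ∀ c, LipschitzWith 1 (φ c))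
    (hmono : ∀ c, Monotone (φ c) ∨ Antitone (φ c)) (hM0 : 0 ≤ M)
    (hM : ∀ c y, |y| ≤ M → |φ c y| ≤ M) (haM : ∀ i, |a i| + ε ≤ M)
    (hq : ∀ y y', |y| ≤ M → |y'| ≤ M → q y = q y' → |y - y'| < ε)
    (hgap : ∀ i j, i ≠ j → 3 * ε < |a i - a j|) (hL : 0 < L)
    (hsep : ∀ g, 0 < g → g < L → ∀ (w : Fin g → Fin k) i j, 8 * ε < |wcomp φ w (a i) - a j|)
    (hnm : n ≤ L * m) :
    Nat.card (itinE hk φ a ε n) ≤ (n + 1) * (2 * (N * (L * ((k - 1) * 2) + 1) ^ m)) := by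
  have hwit : ∀ ω : itinE hk φ a ε n, ∃ δ x, |δ| ≤ ε ∧ ∀ j : Fin n,
      ω.1 j = pcIdx hk (fun i => a i + δ) ((pc hk φ fun i => a i + δ)^[j] x) :=
    fun ⟨_, δ, hδ, x, _, hω⟩ => ⟨δ, x, hδ, hω⟩
  choose δ x hδ hω using hwit
  have hinj : Function.Injective fun ω => itinCode hk φ a ε M q L m n (δ ω) (x ω) :=
    fun ω ω' h => Subtype.ext <| funext fun j => by
      rw [hω, hω ω', pcIdx_iterate_eq_of_itinCode_eq hk hφ hmono hM0 hM haM hq hgap hL hsep hnm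
        (hδ ω) (hδ ω') h j.2]
  refine (Nat.card_le_card_of_injective _ hinj).trans_eq ?_
  simp [Nat.card_eq_fintype_card]

end Counting

section Asymptotics

theorem limsup_log_div_mem_Icc {u : ℕ → ℕ} {C B L : ℕ} (hC : 0 < C) (hB : 0 < B) (hL : 0 < L)
    (hu : ∀ n, u n ≤ C * (n + 1) * B ^ (n / L + 1)) :
    limsup (fun n => Real.log (u n) / n) atTop ∈ Icc 0 (Real.log B / L) := by
  set g : ℕ → ℝ := fun n => Real.log (n + 1) / n + (Real.log C + Real.log B) / n + Real.log B / L
  have hf0 : ∀ n : ℕ, 0 ≤ Real.log (u n) / n := fun n =>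
    div_nonneg (Real.log_natCast_nonneg _) n.cast_nonneg
  have hg : Tendsto g atTop (𝓝 (Real.log B / L)) := by
    have hlog : Tendsto (fun n : ℕ => Real.log (n + 1) / n) atTop (𝓝 0) := by
      have := (Real.tendsto_pow_log_div_mul_add_atTop 1 (-1) 1 one_ne_zero).comp
        (tendsto_atTop_add_const_right _ 1 tendsto_natCast_atTop_atTop)
      simpa [Function.comp_def] using this
    simpa using (hlog.add (tendsto_const_div_atTop_nhds_zero_nat _)).add_const (Real.log B / L)
  have hfg : ∀ᶠ n : ℕ in atTop, Real.log (u n) / n ≤ g n := by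
    filter_upwards [eventually_gt_atTop 0] with n hn
    have hlogB := Real.log_natCast_nonneg B
    have hlog : Real.log (u n) ≤
        Real.log C + Real.log (n + 1) + ((n : ℝ) / L + 1) * Real.log B := by
      calc Real.log (u n) ≤ Real.log (C * (n + 1) * B ^ (n / L + 1) : ℕ) := by
            rcases (u n).eq_zero_or_pos with h0 | hpos
            · rw [h0, Nat.cast_zero, Real.log_zero]
              exact Real.log_natCast_nonneg _
            · exact Real.log_le_log (by exact_mod_cast hpos) (by exact_mod_cast hu n)
        _ = Real.log C + Real.log (n + 1) + ((n / L : ℕ) + 1) * Real.log B := by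
            push_cast
            rw [Real.log_mul (by positivity) (by positivity), Real.log_mul (by positivity)
              (by positivity), Real.log_pow]
            push_cast
            ring
        _ ≤ _ := by gcongr; exact Nat.cast_div_le
    calc Real.log (u n) / n
        ≤ (Real.log C + Real.log (n + 1) + ((n : ℝ) / L + 1) * Real.log B) / n := by gcongr
      _ = g n := by simp only [g]; field_simp; ring
  have hbdd : IsBoundedUnder (· ≤ ·) atTop fun n : ℕ => Real.log (u n) / n :=
    hg.isBoundedUnder_le.mono_le hfg
  refine ⟨le_limsup_of_frequently_le (Frequently.of_forall hf0) hbdd, ?_⟩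
  calc limsup (fun n : ℕ => Real.log (u n) / n) atTop ≤ limsup g atTop :=
        limsup_le_limsup hfg (isCoboundedUnder_le_of_le atTop hf0) hg.isBoundedUnder_le
    _ = Real.log B / L := hg.limsup_eq

theorem tendsto_log_mul_add_one_div {K : ℕ} (hK : 0 < K) :
    Tendsto (fun L : ℕ => Real.log (L * K + 1 : ℕ) / L) atTop (𝓝 0) := by
  have hK' : (0 : ℝ) < K := by exact_mod_cast hK
  have := (Real.tendsto_pow_log_div_mul_add_atTop (1 / K) (-1 / K) 1 (by positivity)).comp
    (tendsto_atTop_add_const_right _ 1 (tendsto_natCast_atTop_atTop.atTop_mul_const hK'))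
  refine this.congr fun L => ?_
  simp only [Function.comp_apply, pow_one]
  push_cast
  congr 1
  field_simp
  ring

end Asymptotics

section SmallScales

theorem eventually_mul_lt {v : ℝ} (hv : 0 < v) (c : ℝ) : ∀ᶠ ε in 𝓝 (0 : ℝ), c * ε < v := by
  have : Tendsto (fun ε : ℝ => c * ε) (𝓝 0) (𝓝 0) := by
    simpa using (tendsto_id (x := 𝓝 (0 : ℝ))).const_mul c
  exact this.eventually_lt_const hv

variable {k : ℕ} {a : Fin (k-1) → ℝ}

theorem eventually_mul_lt_abs_sub (ha : Function.Injective a) (c : ℝ) :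
    ∀ᶠ ε in 𝓝 (0 : ℝ), ∀ i j, i ≠ j → c * ε < |a i - a j| :=
  eventually_all.2 fun _ => eventually_all.2 fun _ => eventually_imp_distrib_left.2 fun hij =>
    eventually_mul_lt (abs_pos.2 (sub_ne_zero.2 (ha.ne hij))) c

theorem eventually_mul_lt_abs_wcomp_sub {φ : Fin k → ℝ → ℝ} (hns : ¬ hasSingConn φ a) (c : ℝ)
    (L : ℕ) : ∀ᶠ ε in 𝓝 (0 : ℝ), ∀ g, 0 < g → g < L → ∀ (w : Fin g → Fin k) i j,
      c * ε < |wcomp φ w (a i) - a j| := by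
  have hpos : ∀ g, 0 < g → ∀ (w : Fin g → Fin k) i j, 0 < |wcomp φ w (a i) - a j| := by
    rintro _ hg w i j
    obtain ⟨g, rfl⟩ : ∃ g', g' + 1 = _ := ⟨_, Nat.sub_add_cancel hg⟩
    exact abs_pos.2 (sub_ne_zero.2 fun h => hns ⟨g, w, i, j, h⟩)
  have := (eventually_all_finset (Finset.range L)).2 fun g _ =>
    eventually_imp_distrib_left.2 fun hg => eventually_all.2 fun w => eventually_all.2 fun i =>
      eventually_all.2 fun j => eventually_mul_lt (hpos g hg w i j) c
  exact this.mono fun ε h g hg hgL => h g (Finset.mem_range.2 hgL) hg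

end SmallScales

theorem eventually_limsup_log_card_itinE_mem_Icc {k : ℕ} (hk : 2 ≤ k) {φ : Fin k → ℝ → ℝ}
    {lam : ℝ≥0} (hlam : lam < 1) (hlip : ∀ i, LipschitzWith lam (φ i))
    (hinj : ∀ i, Function.Injective (φ i)) {a : Fin (k-1) → ℝ} (ha : Function.Injective a)
    (hns : ¬ hasSingConn φ a) {L : ℕ} (hL : 0 < L) :
    ∀ᶠ ε in 𝓝[>] 0, limsup (fun n : ℕ => Real.log (Nat.card (itinE hk φ a ε n)) / n) atTop ∈
      Icc 0 (Real.log (L * ((k - 1) * 2) + 1 : ℕ) / L) := by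
  have hφ : ∀ c, LipschitzWith 1 (φ c) := fun c => (hlip c).weaken hlam.le
  have hmono : ∀ c, Monotone (φ c) ∨ Antitone (φ c) := fun c =>
    ((hlip c).continuous.strictMono_of_inj (hinj c)).imp StrictMono.monotone StrictAnti.antitone
  filter_upwards [self_mem_nhdsWithin,
    nhdsWithin_le_nhds (eventually_mul_lt_abs_sub ha 3),
    nhdsWithin_le_nhds (eventually_mul_lt_abs_wcomp_sub hns 8 L)] with ε (hε : 0 < ε) hgap hsep
  have hA : ∀ i, |a i| ≤ ∑ j, |a j| := fun i =>
    Finset.single_le_sum (fun j _ => abs_nonneg (a j)) (Finset.mem_univ i)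
  obtain ⟨M, hRM, hM⟩ := exists_absorbing_radius hlam hlip (ε + ∑ j, |a j|)
  have hM0 : 0 ≤ M := by
    linarith [Finset.sum_nonneg fun j (_ : j ∈ Finset.univ) => abs_nonneg (a j)]
  obtain ⟨N, q, hq⟩ := exists_quantizer M hε
  refine limsup_log_div_mem_Icc (C := 2 * N) (by have := (q 0).pos; omega) (by omega) hL
    fun n => ?_
  calc Nat.card (itinE hk φ a ε n) ≤ (n + 1) * (2 * (N * (L * ((k - 1) * 2) + 1) ^ (n / L + 1))) :=
        card_itinE_le hk hφ hmono hM0 hM (fun i => by linarith [hA i]) hq hgap hL hsep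
          (Nat.lt_mul_div_succ n hL).le
    _ = 2 * N * (n + 1) * (L * ((k - 1) * 2) + 1) ^ (n / L + 1) := by ring

theorem stmt13 {k : ℕ} (hk : 2 ≤ k) (φ : Fin k → ℝ → ℝ) (lam : ℝ≥0) (hlam : lam < 1)
    (hlip : ∀ i, LipschitzWith lam (φ i)) (hinj : ∀ i, Function.Injective (φ i))
    (a : Fin (k-1) → ℝ) (ha : StrictMono a) (hns : ¬ hasSingConn φ a) :
    Filter.Tendsto
      (fun ε : ℝ => Filter.limsup
        (fun n : ℕ => Real.log (Nat.card ↥(itinE hk φ a ε n)) / n) Filter.atTop)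
      (nhdsWithin 0 (Set.Ioi 0)) (nhds 0) := by
  refine Metric.tendsto_nhds.2 fun η hη => ?_
  obtain ⟨L, hL, hLη⟩ := ((eventually_gt_atTop 0).and
    ((tendsto_log_mul_add_one_div (K := (k - 1) * 2) (by omega)).eventually
      (gt_mem_nhds hη))).exists
  filter_upwards [eventually_limsup_log_card_itinE_mem_Icc hk hlam hlip hinj ha.injective hns hL]
    with ε hε
  rw [Real.dist_0_eq_abs, abs_of_nonneg hε.1]
  exact hε.2.trans_lt hLη
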